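/- Let T ≥ 1, β ∈ (0,1), δ = 2^{-3T-3}, and suppose E ⊆ [0,1] satisfies H^β_∞(E) ≥ 1 − δ. If β is sufficiently close to 1 (so that 1 − 2^{-3T-3} > 2^{-Tβ}(2^T − 1/2)), then every dyadic interval Q of generation T satisfies H^β_∞(E ∩ Q) ≥ (1/2)·l(Q)^β = (1/2)·2^{-Tβ}. -/

import Mathlib

open MeasureTheory Set ENNReal

/-- The dyadic interval `[k 2^{-j}, (k+1) 2^{-j}]`. -/
def dyadicInterval (j k : ℕ) : Set ℝ :=
  Icc ((k : ℝ) / 2 ^ j) (((k : ℝ) + 1) / 2 ^ j)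

/-- β-dimensional Hausdorff content defined via countable covers by dyadic intervals. -/
noncomputable def dyadicHausdorffContent (β : ℝ) (S : Set ℝ) : ℝ≥0∞ :=
  ⨅ (c : ℕ → ℕ × ℕ) (_ : ∀ i, (c i).2 < 2 ^ (c i).1)
    (_ : S ⊆ ⋃ i, dyadicInterval (c i).1 (c i).2),
    ∑' i, (ENNReal.ofReal ((2 : ℝ) ^ (-((c i).1 : ℝ)))) ^ β

/-! Write `H` for the content. Since `E \ Q` is covered by the other `2^T - 1` intervals of
generation `T`, each of content weight `r = 2^{-Tβ}`, subadditivity gives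
`1 - δ ≤ H(E) ≤ H(E ∩ Q) + (2^T - 1) r`, and the closeness assumption
`r (2^T - 1/2) < 1 - δ` leaves `H(E ∩ Q) ≥ r / 2`. -/

theorem exists_dyadicInterval_mem (j : ℕ) {x : ℝ} (hx : x ∈ Icc (0 : ℝ) 1) :
    ∃ i < 2 ^ j, x ∈ dyadicInterval j i := by
  obtain ⟨hx0, hx1⟩ := hx
  have hpow : (0 : ℝ) < 2 ^ j := by positivity
  rcases hx1.lt_or_eq with hx1 | rfl
  · have hnonneg : 0 ≤ x * 2 ^ j := by positivity
    refine ⟨⌊x * 2 ^ j⌋₊, ?_, ?_, ?_⟩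
    · rw [Nat.floor_lt hnonneg]
      push_cast
      nlinarith
    · rw [div_le_iff₀ hpow]
      exact Nat.floor_le hnonneg
    · rw [le_div_iff₀ hpow]
      exact (Nat.lt_floor_add_one _).le
  · refine ⟨2 ^ j - 1, Nat.sub_lt (by positivity) one_pos, ?_⟩
    have hcast : ((2 ^ j - 1 : ℕ) : ℝ) = 2 ^ j - 1 := by
      push_cast [Nat.one_le_two_pow]
      ring
    rw [dyadicInterval, hcast, mem_Icc, div_le_one hpow, le_div_iff₀ hpow]
    constructor <;> linarith

theorem subset_inter_union_biUnion_dyadicInterval {E : Set ℝ} (hE : E ⊆ Icc (0 : ℝ) 1)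
    (j : ℕ) {k : ℕ} :
    E ⊆ (E ∩ dyadicInterval j k) ∪
      ⋃ i ∈ (Finset.range (2 ^ j)).erase k, dyadicInterval j i := by
  intro x hx
  obtain ⟨i, hi, hxi⟩ := exists_dyadicInterval_mem j (hE hx)
  by_cases hik : i = k
  · exact Or.inl ⟨hx, hik ▸ hxi⟩
  · exact Or.inr (mem_biUnion (Finset.mem_erase.2 ⟨hik, Finset.mem_range.2 hi⟩) hxi)

namespace dyadicHausdorffContent

variable {β : ℝ}

theorem mono {S S' : Set ℝ} (h : S ⊆ S') :
    dyadicHausdorffContent β S ≤ dyadicHausdorffContent β S' :=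
  iInf_mono fun _ => iInf_mono fun _ => iInf_mono' fun hS' => ⟨h.trans hS', le_rfl⟩

theorem union_dyadicInterval_le (S : Set ℝ) {j k : ℕ} (hk : k < 2 ^ j) :
    dyadicHausdorffContent β (S ∪ dyadicInterval j k) ≤
      dyadicHausdorffContent β S + ENNReal.ofReal ((2 : ℝ) ^ (-(j : ℝ))) ^ β := by
  simp only [dyadicHausdorffContent, ENNReal.iInf_add]
  refine le_iInf fun c => le_iInf fun hc => le_iInf fun hS => ?_
  let c' : ℕ → ℕ × ℕ := fun n => Nat.casesOn n (j, k) c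
  have hc' : ∀ i, (c' i).2 < 2 ^ (c' i).1 := by
    rintro (_ | i)
    exacts [hk, hc i]
  have hS' : S ∪ dyadicInterval j k ⊆ ⋃ i, dyadicInterval (c' i).1 (c' i).2 := by
    rintro x (hx | hx)
    · obtain ⟨i, hi⟩ := mem_iUnion.1 (hS hx)
      exact mem_iUnion.2 ⟨i + 1, hi⟩
    · exact mem_iUnion.2 ⟨0, hx⟩
  refine iInf_le_of_le c' (iInf_le_of_le hc' (iInf_le_of_le hS' ?_))
  rw [tsum_eq_zero_add' ENNReal.summable, add_comm]
  rfl

theorem union_biUnion_dyadicInterval_le (S : Set ℝ) (j : ℕ) {F : Finset ℕ}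
    (hF : ∀ i ∈ F, i < 2 ^ j) :
    dyadicHausdorffContent β (S ∪ ⋃ i ∈ F, dyadicInterval j i) ≤
      dyadicHausdorffContent β S + F.card * ENNReal.ofReal ((2 : ℝ) ^ (-(j : ℝ))) ^ β := by
  induction F using Finset.induction_on with
  | empty => simp
  | insert i F hi ih =>
    rw [Finset.set_biUnion_insert, union_left_comm, union_comm (dyadicInterval j i),
      Finset.card_insert_of_notMem hi, Nat.cast_succ, add_one_mul, ← add_assoc]
    calc _ ≤ dyadicHausdorffContent β (S ∪ ⋃ i ∈ F, dyadicInterval j i) +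
          ENNReal.ofReal ((2 : ℝ) ^ (-(j : ℝ))) ^ β :=
          union_dyadicInterval_le _ (hF i (Finset.mem_insert_self i F))
      _ ≤ _ := add_le_add_left (ih fun i hi => hF i (Finset.mem_insert_of_mem hi)) _

end dyadicHausdorffContent

theorem ofReal_two_rpow_neg_rpow (j : ℕ) {β : ℝ} (hβ : 0 ≤ β) :
    ENNReal.ofReal ((2 : ℝ) ^ (-(j : ℝ))) ^ β = ENNReal.ofReal ((2 : ℝ) ^ (-(j : ℝ) * β)) := by
  rw [ENNReal.ofReal_rpow_of_nonneg (by positivity) hβ, ← Real.rpow_mul zero_le_two]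

theorem stmt15_general (T : ℕ) (β : ℝ) (hβ : β ∈ Ioo (0 : ℝ) 1)
    (E : Set ℝ) (hE : E ⊆ Icc (0 : ℝ) 1)
    (hcontent : ENNReal.ofReal (1 - (2 : ℝ) ^ (-(3 * (T : ℝ)) - 3)) ≤
      dyadicHausdorffContent β E)
    (hclose : (2 : ℝ) ^ (-(T : ℝ) * β) * ((2 : ℝ) ^ (T : ℕ) - 1 / 2) <
      1 - (2 : ℝ) ^ (-(3 * (T : ℝ)) - 3)) :
    ∀ k : ℕ, k < 2 ^ T →
      ENNReal.ofReal ((1 / 2) * (2 : ℝ) ^ (-(T : ℝ) * β)) ≤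
        dyadicHausdorffContent β (E ∩ dyadicInterval T k) := by
  intro k hk
  set r : ℝ := (2 : ℝ) ^ (-(T : ℝ) * β)
  have hr : 0 ≤ r := by positivity
  have hcard : (((Finset.range (2 ^ T)).erase k).card : ℝ) = 2 ^ T - 1 := by
    rw [Finset.card_erase_of_mem (Finset.mem_range.2 hk), Finset.card_range]
    push_cast [Nat.one_le_two_pow]
    ring
  have hsub : ENNReal.ofReal (1 - (2 : ℝ) ^ (-(3 * (T : ℝ)) - 3)) ≤
      dyadicHausdorffContent β (E ∩ dyadicInterval T k) + ENNReal.ofReal ((2 ^ T - 1) * r) := by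
    calc _ ≤ dyadicHausdorffContent β E := hcontent
      _ ≤ _ := dyadicHausdorffContent.mono (subset_inter_union_biUnion_dyadicInterval hE T)
      _ ≤ _ := dyadicHausdorffContent.union_biUnion_dyadicInterval_le _ T
          fun i hi => Finset.mem_range.1 (Finset.mem_of_mem_erase hi)
      _ = _ := by
          rw [ofReal_two_rpow_neg_rpow T hβ.1.le, ← ENNReal.ofReal_natCast,
            ← ENNReal.ofReal_mul (Nat.cast_nonneg _), hcard]
  have h2T : (1 : ℝ) ≤ 2 ^ T := one_le_pow₀ one_le_two
  refine ENNReal.le_of_add_le_add_right ENNReal.ofReal_ne_top (le_trans ?_ hsub)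
  rw [← ENNReal.ofReal_add (by positivity) (by nlinarith)]
  exact ENNReal.ofReal_le_ofReal (by linarith)

theorem stmt15 (T : ℕ) (hT : 1 ≤ T) (β : ℝ) (hβ : β ∈ Ioo (0 : ℝ) 1)
    (E : Set ℝ) (hE : E ⊆ Icc (0 : ℝ) 1)
    (hcontent : ENNReal.ofReal (1 - (2 : ℝ) ^ (-(3 * (T : ℝ)) - 3)) ≤
      dyadicHausdorffContent β E)
    (hclose : (2 : ℝ) ^ (-(T : ℝ) * β) * ((2 : ℝ) ^ (T : ℕ) - 1 / 2) <
      1 - (2 : ℝ) ^ (-(3 * (T : ℝ)) - 3)) :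
    ∀ k : ℕ, k < 2 ^ T →
      ENNReal.ofReal ((1 / 2) * (2 : ℝ) ^ (-(T : ℝ) * β)) ≤
        dyadicHausdorffContent β (E ∩ dyadicInterval T k) :=
  stmt15_general T β hβ E hE hcontent hclose
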